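/- arXiv:2104.11407 — 7 statements merged into one kernel-verified Lean document; each statement's English description precedes it below -/
import Mathlib

section
/- In the ring S = 𝔽₂[a,w][u,u⁻¹] (Laurent in u, polynomial in a, w), the elements c = u·w and b = a·w + u·w² satisfy c² = a·c + u·b, and moreover every element in the 𝔽₂[a,u,u⁻¹]-subalgebra generated by c and b can be written uniquely as f(b) + c·g(b) with f, g ∈ 𝔽₂[a,u,u⁻¹][b]. -/
/-!
In characteristic 2 the two cross terms `a·u·w` of `a·c + u·b` cancel, leaving `u²w² = c²`. This
relation rewrites any product of elements `f(b) + c·g(b)` in the same form, so these elements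
exhaust the `R₀`-algebra generated by `c` and `b`.

For uniqueness, read `S = 𝔽₂[a,u,u⁻¹][w]` as a polynomial ring in `w` over `R₀`. There `b` has
degree 2 and `c` degree 1, so `f(b)` has even degree and `c·g(b)` odd degree; they can only cancel
when `f = g = 0`.
-/

noncomputable section

namespace Stmt5

/-- `S = 𝔽₂[a,w][u,u⁻¹]`. -/
abbrev S : Type := LaurentPolynomial (MvPolynomial (Fin 2) (ZMod 2))

def a : S := LaurentPolynomial.C (MvPolynomial.X 0)
def w : S := LaurentPolynomial.C (MvPolynomial.X 1)
def u : S := LaurentPolynomial.T 1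
def uinv : S := LaurentPolynomial.T (-1)

def c : S := u * w
def b : S := a * w + u * w ^ 2

/-- The coefficient subring `𝔽₂[a,u,u⁻¹] ⊆ S`. -/
def R₀ : Subalgebra (ZMod 2) S := Algebra.adjoin (ZMod 2) ({a, u, uinv} : Set S)

open Polynomial

section General

variable {R A : Type*}

theorem eq_zero_of_comp_eq_zero [Semiring R] [NoZeroDivisors R] {p q : R[X]}
    (hq : 0 < q.natDegree) (h : p.comp q = 0) : p = 0 :=
  (comp_eq_zero_iff.mp h).resolve_right fun hC => hq.ne' (by rw [hC.2, natDegree_C])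

theorem comp_add_mul_comp_eq_zero [CommRing R] [NoZeroDivisors R] {p q F G : R[X]}
    (hq : 0 < q.natDegree) (hpq : ¬ q.natDegree ∣ p.natDegree)
    (h : F.comp q + p * G.comp q = 0) : F = 0 ∧ G = 0 := by
  have hp : p ≠ 0 := by rintro rfl; exact hpq (dvd_zero _)
  obtain rfl : G = 0 := by
    by_contra hG
    have hGq : G.comp q ≠ 0 := mt (eq_zero_of_comp_eq_zero hq) hG
    have hdeg := congrArg natDegree (eq_neg_of_add_eq_zero_left h)
    rw [natDegree_neg, natDegree_mul hp hGq, natDegree_comp, natDegree_comp] at hdeg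
    exact hpq ((Nat.dvd_add_left (dvd_mul_left _ _)).mp (hdeg ▸ dvd_mul_left _ _))
  rw [zero_comp, mul_zero, add_zero] at h
  exact ⟨eq_zero_of_comp_eq_zero hq h, rfl⟩

theorem exists_eq_aeval_add_mul_aeval [CommSemiring R] [CommSemiring A] [Algebra R A]
    {b c : A} (p r : R[X]) (hc : c ^ 2 = aeval b p + c * aeval b r)
    {x : A} (hx : x ∈ Algebra.adjoin R {c, b}) :
    ∃ fg : R[X] × R[X], x = aeval b fg.1 + c * aeval b fg.2 := by
  induction hx using Algebra.adjoin_induction with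
  | mem x hx =>
    rcases hx with rfl | rfl
    · exact ⟨(0, 1), by simp⟩
    · exact ⟨(X, 0), by simp⟩
  | algebraMap r => exact ⟨(C r, 0), by simp⟩
  | add x y _ _ ihx ihy =>
    obtain ⟨⟨f₁, g₁⟩, rfl⟩ := ihx
    obtain ⟨⟨f₂, g₂⟩, rfl⟩ := ihy
    exact ⟨(f₁ + f₂, g₁ + g₂), by simp only [map_add]; ring⟩
  | mul x y _ _ ihx ihy =>
    obtain ⟨⟨f₁, g₁⟩, rfl⟩ := ihx
    obtain ⟨⟨f₂, g₂⟩, rfl⟩ := ihy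
    refine ⟨(f₁ * f₂ + p * (g₁ * g₂), f₁ * g₂ + g₁ * f₂ + r * (g₁ * g₂)), ?_⟩
    have expand : ∀ F₁ G₁ F₂ G₂ : A, (F₁ + c * G₁) * (F₂ + c * G₂) =
        F₁ * F₂ + c ^ 2 * (G₁ * G₂) + c * (F₁ * G₂ + G₁ * F₂) := fun _ _ _ _ => by ring
    simp only [map_add, map_mul, expand, hc]
    ring

theorem aeval_add_mul_aeval_injective [CommRing R] [NoZeroDivisors R] [CommRing A] [Algebra R A]
    (φ : A →ₐ[R] R[X]) {b c : A} (hb : 0 < (φ b).natDegree)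
    (hbc : ¬ (φ b).natDegree ∣ (φ c).natDegree) :
    Function.Injective fun fg : R[X] × R[X] => aeval b fg.1 + c * aeval b fg.2 := by
  rintro ⟨f₁, g₁⟩ ⟨f₂, g₂⟩ h
  have h₀ : (f₁ - f₂).comp (φ b) + φ c * (g₁ - g₂).comp (φ b) = 0 := by
    have := congrArg φ (sub_eq_zero.mpr h)
    simp only [map_sub, map_add, map_mul, ← aeval_algHom_apply, map_zero] at this
    simp only [comp_eq_aeval, map_sub, ← this]
    ring
  obtain ⟨hf, hg⟩ := comp_add_mul_comp_eq_zero hb hbc h₀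
  rw [sub_eq_zero] at hf hg
  rw [hf, hg]

end General

theorem c_sq : c ^ 2 = a * c + u * b := by
  have two_eq_zero : (2 : S) = 0 :=
    @CharTwo.two_eq_zero S _ (charP_of_injective_algebraMap' (ZMod 2) 2)
  rw [c, b]
  linear_combination (-(a * u * w)) * two_eq_zero

def aR : R₀ := ⟨a, Algebra.subset_adjoin (by simp)⟩

def uR : R₀ˣ where
  val := ⟨u, Algebra.subset_adjoin (by simp)⟩
  inv := ⟨uinv, Algebra.subset_adjoin (by simp)⟩
  val_inv := Subtype.ext <| show LaurentPolynomial.T 1 * LaurentPolynomial.T (-1) = (1 : S) by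
    rw [← LaurentPolynomial.T_add, add_neg_cancel, LaurentPolynomial.T_zero]
  inv_val := Subtype.ext <| show LaurentPolynomial.T (-1) * LaurentPolynomial.T 1 = (1 : S) by
    rw [← LaurentPolynomial.T_add, neg_add_cancel, LaurentPolynomial.T_zero]

/-- The identification of `S` with `R₀[w]`, sending `w` to `X`. -/
def toPolyW : S →+* R₀[X] :=
  LaurentPolynomial.eval₂ (MvPolynomial.eval₂Hom (algebraMap (ZMod 2) R₀[X]) ![C aR, X])
    (Units.map (C : R₀ →+* R₀[X]).toMonoidHom uR)

theorem toPolyW_a : toPolyW a = C aR := by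
  rw [toPolyW, a, LaurentPolynomial.eval₂_C, MvPolynomial.eval₂Hom_X']; rfl

theorem toPolyW_w : toPolyW w = X := by
  rw [toPolyW, w, LaurentPolynomial.eval₂_C, MvPolynomial.eval₂Hom_X']; rfl

theorem toPolyW_u : toPolyW u = C (uR : R₀) := by
  rw [toPolyW, u, LaurentPolynomial.eval₂_T, zpow_one]; rfl

theorem toPolyW_uinv : toPolyW uinv = C (↑uR⁻¹ : R₀) := by
  rw [toPolyW, uinv, LaurentPolynomial.eval₂_T, zpow_neg_one]; rfl

theorem toPolyW_coe (r : R₀) : toPolyW r = C r := by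
  obtain ⟨r, hr⟩ := r
  induction hr using Algebra.adjoin_induction with
  | mem x hx =>
    rcases hx with rfl | rfl | rfl
    · exact toPolyW_a
    · exact toPolyW_u
    · exact toPolyW_uinv
  | algebraMap z =>
    exact congrArg (· z) (RingHom.ext_zmod (toPolyW.comp (algebraMap (ZMod 2) S))
      (C.comp (algebraMap (ZMod 2) R₀)))
  | add x y _ _ ihx ihy =>
    exact (map_add toPolyW x y).trans ((congrArg₂ (· + ·) ihx ihy).trans (map_add C _ _).symm)
  | mul x y _ _ ihx ihy =>
    exact (map_mul toPolyW x y).trans ((congrArg₂ (· * ·) ihx ihy).trans (map_mul C _ _).symm)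

def toPolyWAlgHom : S →ₐ[R₀] R₀[X] := { toPolyW with commutes' := toPolyW_coe }

theorem natDegree_toPolyWAlgHom_c : (toPolyWAlgHom c).natDegree = 1 := by
  change (toPolyW (u * w)).natDegree = 1
  rw [map_mul, toPolyW_u, toPolyW_w]
  compute_degree!

theorem natDegree_toPolyWAlgHom_b : (toPolyWAlgHom b).natDegree = 2 := by
  change (toPolyW (a * w + u * w ^ 2)).natDegree = 2
  rw [map_add, map_mul, map_mul, map_pow, toPolyW_a, toPolyW_u, toPolyW_w]
  compute_degree!

/-- `c = u·w` and `b = a·w + u·w²` satisfy `c² = a·c + u·b`, and every element of the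
`𝔽₂[a,u,u⁻¹]`-subalgebra generated by `c` and `b` is uniquely of the form `f(b) + c·g(b)`. -/
theorem relation_and_unique_rep :
    c ^ 2 = a * c + u * b ∧
    ∀ x ∈ Algebra.adjoin R₀ ({c, b} : Set S),
      ∃! fg : Polynomial R₀ × Polynomial R₀,
        x = Polynomial.aeval b fg.1 + c * Polynomial.aeval b fg.2 := by
  refine ⟨c_sq, fun x hx => ?_⟩
  have hc : c ^ 2 = aeval b (C (uR : R₀) * X) + c * aeval b (C aR) := by
    rw [map_mul, aeval_C, aeval_C, aeval_X, Subalgebra.algebraMap_apply,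
      Subalgebra.algebraMap_apply, c_sq]
    change a * c + u * b = u * b + c * a
    ring
  obtain ⟨fg, hfg⟩ := exists_eq_aeval_add_mul_aeval _ _ hc hx
  have hinj := aeval_add_mul_aeval_injective (R := R₀) toPolyWAlgHom (b := b) (c := c)
    (by rw [natDegree_toPolyWAlgHom_b]; norm_num)
    (by rw [natDegree_toPolyWAlgHom_b, natDegree_toPolyWAlgHom_c]; norm_num)
  exact ⟨fg, hfg, fun fg' hfg' => hinj (hfg'.symm.trans hfg)⟩

end Stmt5

end
end

section
/- With T = 𝔽₂[a_σ, a_λ, w][u_σ^{±1}, u_λ^{±1}]/(a_σ²) and e_u = u_σ u_λ w, e_λ = u_λ w², e_a = u_σ u_λ w³ + u_σ a_λ w, e_ρ = u_σ u_λ w⁴ + a_σ u_λ w³ + u_σ a_λ w² + a_σ a_λ w, one has e_λ² = u_σ⁻¹ u_λ·e_ρ + a_σ u_σ⁻² u_λ·e_a + a_λ·e_λ. -/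
noncomputable section

namespace StmtT

/-- The Laurent/polynomial ring `𝔽₂[a_σ, a_λ, w][u_σ^{±1}, u_λ^{±1}]`, realized as the group
algebra of `ℤ × ℤ` (the exponents of `u_σ` and `u_λ`) over `𝔽₂[a_σ, a_λ, w]`. -/
abbrev L : Type := AddMonoidAlgebra (MvPolynomial (Fin 3) (ZMod 2)) (ℤ × ℤ)

def asL : L := AddMonoidAlgebra.single (0, 0) (MvPolynomial.X 0)

/-- `T = 𝔽₂[a_σ, a_λ, w][u_σ^{±1}, u_λ^{±1}]/(a_σ²)`. -/
abbrev T : Type := L ⧸ Ideal.span ({asL ^ 2} : Set L)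

def q : L →+* T := Ideal.Quotient.mk _

/-- `a_σ` -/
def as : T := q asL
/-- `a_λ` -/
def al : T := q (AddMonoidAlgebra.single (0, 0) (MvPolynomial.X 1))
/-- `w` -/
def w : T := q (AddMonoidAlgebra.single (0, 0) (MvPolynomial.X 2))
/-- `u_σ` -/
def us : T := q (AddMonoidAlgebra.single (1, 0) 1)
/-- `u_σ⁻¹` -/
def usInv : T := q (AddMonoidAlgebra.single (-1, 0) 1)
/-- `u_λ` -/
def ul : T := q (AddMonoidAlgebra.single (0, 1) 1)
/-- `u_λ⁻¹` -/
def ulInv : T := q (AddMonoidAlgebra.single (0, -1) 1)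

/-- `e_u = u_σ u_λ w` -/
def eu : T := us * ul * w
/-- `e_λ = u_λ w²` -/
def el : T := ul * w ^ 2
/-- `e_a = u_σ u_λ w³ + u_σ a_λ w` -/
def ea : T := us * ul * w ^ 3 + us * al * w
/-- `e_ρ = u_σ u_λ w⁴ + a_σ u_λ w³ + u_σ a_λ w² + a_σ a_λ w` -/
def er : T := us * ul * w ^ 4 + as * ul * w ^ 3 + us * al * w ^ 2 + as * al * w


end StmtT

theorem natCast_eq_zero_of_algebra_zmod {A : Type*} [Semiring A] (n : ℕ) [Algebra (ZMod n) A] :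
    (n : A) = 0 := by
  rw [← map_natCast (algebraMap (ZMod n) A), ZMod.natCast_self, map_zero]

namespace StmtT

theorem usInv_mul_us : usInv * us = 1 := by
  rw [usInv, us, ← map_mul, AddMonoidAlgebra.single_mul_single, mul_one, Prod.mk_add_mk,
    neg_add_cancel, add_zero, Prod.mk_zero_zero, ← AddMonoidAlgebra.one_def, map_one]

theorem usInv_mul_ul_mul_er :
    usInv * ul * er = el ^ 2 + as * usInv ^ 2 * ul * ea + al * el := by
  unfold er el ea
  linear_combination
    (ul ^ 2 * w ^ 4 + al * ul * w ^ 2 - as * usInv * ul ^ 2 * w ^ 3 - as * al * usInv * ul * w) *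
      usInv_mul_us

end StmtT

/-- In `T`: `e_λ² = u_σ⁻¹ u_λ·e_ρ + a_σ u_σ⁻² u_λ·e_a + a_λ·e_λ`. -/
theorem stmt8 : StmtT.el ^ 2 = StmtT.usInv * StmtT.ul * StmtT.er +
    StmtT.as * StmtT.usInv ^ 2 * StmtT.ul * StmtT.ea + StmtT.al * StmtT.el := by
  rw [StmtT.usInv_mul_ul_mul_er]
  -- the last two summands now occur twice, and `T` has characteristic 2
  linear_combination (-(StmtT.as * StmtT.usInv ^ 2 * StmtT.ul * StmtT.ea + StmtT.al * StmtT.el)) *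
    natCast_eq_zero_of_algebra_zmod (A := StmtT.T) 2
end
end

section
/- With T = 𝔽₂[a_σ, a_λ, w][u_σ^{±1}, u_λ^{±1}]/(a_σ²) and e_u = u_σ u_λ w, e_λ = u_λ w², e_a = u_σ u_λ w³ + u_σ a_λ w, e_ρ = u_σ u_λ w⁴ + a_σ u_λ w³ + u_σ a_λ w² + a_σ a_λ w, one has e_a·e_λ = u_σ⁻¹·e_u·e_ρ + a_σ u_σ⁻¹ u_λ·e_ρ. -/
noncomputable section

set_option maxHeartbeats 2000000 in
/-- In `T`: `e_a·e_λ = u_σ⁻¹·e_u·e_ρ + a_σ u_σ⁻¹ u_λ·e_ρ`. -/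
theorem stmt9 : StmtT.ea * StmtT.el = StmtT.usInv * StmtT.eu * StmtT.er +
    StmtT.as * StmtT.usInv * StmtT.ul * StmtT.er := by
  have h1 : StmtT.us * StmtT.usInv = 1 := by
    rw [StmtT.us, StmtT.usInv, ← map_mul, AddMonoidAlgebra.single_mul_single, one_mul]
    have : ((1 : ℤ), (0 : ℤ)) + (-1, 0) = 0 := by norm_num
    rw [this, ← AddMonoidAlgebra.one_def, map_one]
  have h2 : StmtT.as ^ 2 = 0 := by
    rw [StmtT.as, ← map_pow]
    exact Ideal.Quotient.eq_zero_iff_mem.mpr (Ideal.subset_span rfl)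
  have h3 : (2 : StmtT.T) = 0 := by
    have hL : (2 : StmtT.L) = 0 := by
      have : (2 : StmtT.L) = AddMonoidAlgebra.single (0 : ℤ × ℤ)
          (1 : MvPolynomial (Fin 3) (ZMod 2)) + AddMonoidAlgebra.single 0 1 := by
        rw [← AddMonoidAlgebra.one_def]; ring
      rw [this, ← AddMonoidAlgebra.single_add]
      have h2' : (1 + 1 : MvPolynomial (Fin 3) (ZMod 2)) = 0 := by
        rw [one_add_one_eq_two]; exact CharTwo.two_eq_zero
      rw [h2', AddMonoidAlgebra.single_zero]
    calc (2 : StmtT.T) = StmtT.q 2 := by rw [map_ofNat]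
      _ = 0 := by rw [hL, map_zero]
  rw [StmtT.ea, StmtT.el, StmtT.eu, StmtT.er]
  linear_combination (-(StmtT.ul * StmtT.w * (StmtT.us * StmtT.ul * StmtT.w ^ 4 +
      StmtT.as * StmtT.ul * StmtT.w ^ 3 + StmtT.us * StmtT.al * StmtT.w ^ 2 +
      StmtT.as * StmtT.al * StmtT.w) + StmtT.as * StmtT.ul ^ 2 * StmtT.w ^ 4 +
      StmtT.as * StmtT.al * StmtT.ul * StmtT.w ^ 2)) * h1 +
    (-(StmtT.usInv * StmtT.ul * (StmtT.ul * StmtT.w ^ 3 + StmtT.al * StmtT.w))) * h2 +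
    (-(StmtT.as * StmtT.ul ^ 2 * StmtT.w ^ 4 + StmtT.as * StmtT.al * StmtT.ul * StmtT.w ^ 2)) * h3
end
end

section
/- With T = 𝔽₂[a_σ, a_λ, w][u_σ^{±1}, u_λ^{±1}]/(a_σ²) and e_u = u_σ u_λ w, e_λ = u_λ w², e_a = u_σ u_λ w³ + u_σ a_λ w, e_ρ = u_σ u_λ w⁴ + a_σ u_λ w³ + u_σ a_λ w² + a_σ a_λ w, one has e_a² = u_σ·e_λ·e_ρ + a_σ u_σ⁻¹·e_u·e_ρ + u_σ a_λ·e_ρ + a_σ a_λ·e_a. -/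
noncomputable section

/-! In `T` one has `e_a = u_σ w P` and `e_ρ = w Q P` with `P = u_λ w² + a_λ`, `Q = u_σ w + a_σ`,
and `Q² = u_σ² w²` because `2 = 0` and `a_σ² = 0`. Substituting, and using `a_σ u_σ⁻¹ e_u = a_σ u_λ w`,
the right-hand side becomes `w P (u_λ w Q² + a_λ u_σ Q + a_σ a_λ u_σ) = u_σ² w² P² = e_a²`. -/

namespace StmtT

theorem as_sq : as ^ 2 = 0 := by
  rw [as, ← map_pow]
  exact Ideal.Quotient.eq_zero_iff_mem.mpr (Ideal.subset_span rfl)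

theorem two_eq_zero : (2 : T) = 0 := by
  rw [← map_ofNat (algebraMap (ZMod 2) T) 2, show (2 : ZMod 2) = 0 from rfl, map_zero]

theorem us_mul_w_add_as_sq : (us * w + as) ^ 2 = us ^ 2 * w ^ 2 := by
  linear_combination as_sq + us * w * as * two_eq_zero

theorem ea_eq_mul : ea = us * w * (ul * w ^ 2 + al) := by
  rw [ea]; ring

theorem er_eq_mul : er = w * (us * w + as) * (ul * w ^ 2 + al) := by
  rw [er]; ring

end StmtT

open StmtT in
/-- In `T`: `e_a² = u_σ·e_λ·e_ρ + a_σ u_σ⁻¹·e_u·e_ρ + u_σ a_λ·e_ρ + a_σ a_λ·e_a`. -/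
theorem stmt10 : StmtT.ea ^ 2 = StmtT.us * StmtT.el * StmtT.er +
    StmtT.as * StmtT.usInv * StmtT.eu * StmtT.er + StmtT.us * StmtT.al * StmtT.er +
    StmtT.as * StmtT.al * StmtT.ea := by
  rw [el, eu, ea_eq_mul, er_eq_mul]
  linear_combination (-(ul * w ^ 2 * (ul * w ^ 2 + al))) * us_mul_w_add_as_sq
    - as * al * us * w * (ul * w ^ 2 + al) * two_eq_zero
    - as * ul * w ^ 2 * (us * w + as) * (ul * w ^ 2 + al) * usInv_mul_us
end
end

section
/- Let T = 𝔽₂[a_σ, a_λ, w][u_σ^{±1}, u_λ^{±1}]/(a_σ²) and let β be the unique 𝔽₂-linear derivation of T with β(w) = w², β(u_σ) = a_σ, and β(a_σ) = β(a_λ) = β(u_λ) = 0. Then β(u_σ u_λ w⁴ + a_σ u_λ w³ + u_σ a_λ w² + a_σ a_λ w) = 0 and β(u_λ w) = u_λ w². -/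
noncomputable section

theorem Derivation.map_pow_of_map_eq_sq {R A : Type*} [CommSemiring R] [CommSemiring A]
    [Algebra R A] (D : Derivation R A A) {a : A} (ha : D a = a ^ 2) (n : ℕ) :
    D (a ^ n) = n * a ^ (n + 1) := by
  rcases n with _ | n
  · simp
  · rw [D.leibniz_pow, ha, nsmul_eq_mul, smul_eq_mul, Nat.add_sub_cancel]
    ring

/-- For any 𝔽₂-linear derivation `β` of `T` with `β(w) = w²`, `β(u_σ) = a_σ` and
`β(a_σ) = β(a_λ) = β(u_λ) = 0` (modelling the Bockstein), one has
`β(e_ρ) = 0` and `β(u_λ w) = u_λ w²`. -/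
theorem stmt11 (β : Derivation (ZMod 2) StmtT.T StmtT.T)
    (hw : β StmtT.w = StmtT.w ^ 2) (hus : β StmtT.us = StmtT.as)
    (has : β StmtT.as = 0) (hal : β StmtT.al = 0) (hul : β StmtT.ul = 0) :
    β (StmtT.us * StmtT.ul * StmtT.w ^ 4 + StmtT.as * StmtT.ul * StmtT.w ^ 3 +
        StmtT.us * StmtT.al * StmtT.w ^ 2 + StmtT.as * StmtT.al * StmtT.w) = 0 ∧
    β (StmtT.ul * StmtT.w) = StmtT.ul * StmtT.w ^ 2 := by
  have two_eq_zero : (2 : StmtT.T) = 0 := by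
    exact_mod_cast natCast_eq_zero_of_algebra_zmod (A := StmtT.T) 2
  have hw_pow := β.map_pow_of_map_eq_sq hw
  constructor
  -- Modulo 2, `β(u_σ u_λ w⁴) = a_σ u_λ w⁴ = β(a_σ u_λ w³)` and
  -- `β(u_σ a_λ w²) = a_σ a_λ w² = β(a_σ a_λ w)`, so the four terms cancel in pairs.
  · simp only [map_add, Derivation.leibniz, hw_pow, hw, hus, has, hal, hul, smul_eq_mul]
    open StmtT in
    linear_combination (2 * us * ul * w ^ 5 + us * al * w ^ 3 + 2 * as * ul * w ^ 4
      + as * al * w ^ 2) * two_eq_zero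
  · rw [Derivation.leibniz, hw, hul, smul_eq_mul, smul_eq_mul]
    ring
end
end

section
/- In B = 𝔽₂[a,u][v,v⁻¹][c,b]/(c² + a·c + u·b), with ē_a = v·(a·b + b·c), ē_u = v·u·c, ē_λ = a·c + u·b, ē_ρ = v·b², one has ē_a·ē_u = u²·v·ē_ρ and ē_a·ē_λ = v⁻¹·ē_u·ē_ρ. -/
noncomputable section

namespace StmtB

/-- `𝔽₂[a,u,c,b][v^{±1}]`, realized as the group algebra of `ℤ` (the exponent of `v`)
over `𝔽₂[a,u,c,b]`. -/
abbrev BL : Type := AddMonoidAlgebra (MvPolynomial (Fin 4) (ZMod 2)) ℤ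

def aL : BL := AddMonoidAlgebra.single 0 (MvPolynomial.X 0)
def uL : BL := AddMonoidAlgebra.single 0 (MvPolynomial.X 1)
def cL : BL := AddMonoidAlgebra.single 0 (MvPolynomial.X 2)
def bL : BL := AddMonoidAlgebra.single 0 (MvPolynomial.X 3)

/-- `B = 𝔽₂[a,u][v,v⁻¹][c,b]/(c² + a·c + u·b)`. -/
abbrev B : Type := BL ⧸ Ideal.span ({cL ^ 2 + aL * cL + uL * bL} : Set BL)

def q : BL →+* B := Ideal.Quotient.mk _

def a : B := q aL
def u : B := q uL
def c : B := q cL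
def b : B := q bL
/-- `v` -/
def v : B := q (AddMonoidAlgebra.single 1 1)
/-- `v⁻¹` -/
def vInv : B := q (AddMonoidAlgebra.single (-1) 1)

/-- `ē_a = v·(a·b + b·c)` -/
def ebarA : B := v * (a * b + b * c)
/-- `ē_u = v·u·c` -/
def ebarU : B := v * u * c
/-- `ē_λ = a·c + u·b` -/
def ebarL : B := a * c + u * b
/-- `ē_ρ = v·b²` -/
def ebarR : B := v * b ^ 2

end StmtB

end
/-- In `B`: `ē_a·ē_u = u²·v·ē_ρ` and `ē_a·ē_λ = v⁻¹·ē_u·ē_ρ`. -/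
theorem stmt13 : StmtB.ebarA * StmtB.ebarU = StmtB.u ^ 2 * StmtB.v * StmtB.ebarR ∧
    StmtB.ebarA * StmtB.ebarL = StmtB.vInv * StmtB.ebarU * StmtB.ebarR := by
  have key : StmtB.c ^ 2 + StmtB.a * StmtB.c + StmtB.u * StmtB.b = 0 := by
    simp only [StmtB.c, StmtB.a, StmtB.u, StmtB.b, StmtB.q, ← map_pow, ← map_mul, ← map_add]
    exact Ideal.Quotient.eq_zero_iff_mem.mpr (Ideal.subset_span rfl)
  have hv : StmtB.vInv * StmtB.v = 1 := by
    simp only [StmtB.vInv, StmtB.v, StmtB.q, ← map_mul, AddMonoidAlgebra.single_mul_single]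
    norm_num
  have hm : (1 + 1 : MvPolynomial (Fin 4) (ZMod 2)) = 0 := by
    rw [one_add_one_eq_two, show (2 : MvPolynomial (Fin 4) (ZMod 2)) = MvPolynomial.C 2 from
      (map_ofNat MvPolynomial.C 2).symm, show (2 : ZMod 2) = 0 from rfl, map_zero]
  have h2 : (2 : StmtB.B) = 0 := by
    have hBL : (2 : StmtB.BL) = 0 := by
      rw [show (2 : StmtB.BL) = 1 + 1 by norm_num, AddMonoidAlgebra.one_def,
        ← AddMonoidAlgebra.single_add, hm, AddMonoidAlgebra.single_zero]
    calc (2 : StmtB.B) = StmtB.q 2 := by rw [map_ofNat]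
    _ = 0 := by rw [hBL, map_zero]
  constructor
  · unfold StmtB.ebarA StmtB.ebarU StmtB.ebarR
    linear_combination (StmtB.v ^ 2 * StmtB.u * StmtB.b) * key -
      (StmtB.u ^ 2 * StmtB.v ^ 2 * StmtB.b ^ 2) * h2
  · unfold StmtB.ebarA StmtB.ebarL StmtB.ebarU StmtB.ebarR
    linear_combination (StmtB.v * StmtB.a * StmtB.b) * key -
      (StmtB.v * StmtB.u * StmtB.b ^ 2 * StmtB.c) * hv
end

section
/- In B = 𝔽₂[a,u][v,v⁻¹][c,b]/(c² + a·c + u·b), with ē_a = v·(a·b + b·c), ē_λ = a·c + u·b, ē_ρ = v·b², one has ē_λ² = u²·v⁻¹·ē_ρ + a²·ē_λ and ē_a² = v·ē_λ·ē_ρ + v·a²·ē_ρ. -/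
namespace StmtB

section QuadraticRelation

variable {R : Type*} [CommRing R] {a u c b : R}

-- In characteristic 2, `(a c)^2 = a^2 c^2 = a^2 (a c + u b)` by the relation.
theorem sq_mul_add_mul_of_quadratic (h2 : (2 : R) = 0) (hc : c ^ 2 + a * c + u * b = 0)
    {v w : R} (hvw : v * w = 1) :
    (a * c + u * b) ^ 2 = u ^ 2 * w * (v * b ^ 2) + a ^ 2 * (a * c + u * b) := by
  linear_combination a ^ 2 * hc - u ^ 2 * b ^ 2 * hvw +
    (a * c * u * b - a ^ 3 * c - a ^ 2 * u * b) * h2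

-- In characteristic 2, `(a + c)^2 = a^2 + c^2 = a^2 + a c + u b` by the relation.
theorem sq_mul_mul_add_mul_of_quadratic (h2 : (2 : R) = 0) (hc : c ^ 2 + a * c + u * b = 0)
    (v : R) :
    (v * (a * b + b * c)) ^ 2 = v * (a * c + u * b) * (v * b ^ 2) + v * a ^ 2 * (v * b ^ 2) := by
  linear_combination v ^ 2 * b ^ 2 * hc - v ^ 2 * u * b ^ 3 * h2

end QuadraticRelation

theorem two_eq_zero : (2 : B) = 0 := by
  rw [← map_ofNat (algebraMap (ZMod 2) B) 2, show (2 : ZMod 2) = 0 from rfl, map_zero]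

theorem c_sq_add_a_mul_c_add_u_mul_b : c ^ 2 + a * c + u * b = 0 := by
  have : q (cL ^ 2 + aL * cL + uL * bL) = 0 :=
    Ideal.Quotient.eq_zero_iff_mem.mpr (Ideal.mem_span_singleton_self _)
  simpa only [a, u, c, b, map_add, map_mul, map_pow] using this

theorem v_mul_vInv : v * vInv = 1 := by
  rw [v, vInv, ← map_mul, AddMonoidAlgebra.single_mul_single, add_neg_cancel, mul_one,
    ← AddMonoidAlgebra.one_def, map_one]

end StmtB

/-- In `B`: `ē_λ² = u²·v⁻¹·ē_ρ + a²·ē_λ` and `ē_a² = v·ē_λ·ē_ρ + v·a²·ē_ρ`. -/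
theorem stmt14 : StmtB.ebarL ^ 2 = StmtB.u ^ 2 * StmtB.vInv * StmtB.ebarR +
      StmtB.a ^ 2 * StmtB.ebarL ∧
    StmtB.ebarA ^ 2 = StmtB.v * StmtB.ebarL * StmtB.ebarR +
      StmtB.v * StmtB.a ^ 2 * StmtB.ebarR := by
  open StmtB in
  unfold ebarL ebarR ebarA
  exact ⟨sq_mul_add_mul_of_quadratic (R := B) two_eq_zero c_sq_add_a_mul_c_add_u_mul_b v_mul_vInv,
    sq_mul_mul_add_mul_of_quadratic (R := B) two_eq_zero c_sq_add_a_mul_c_add_u_mul_b v⟩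
end
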